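/- Let R = k[[x_1, ..., x_n]] and let I be a homogeneous ideal (given as the extension of a homogeneous ideal of k[x_1, ..., x_n]) or a monomial ideal. Then the filtration f_I on R/I determined by the chain of ideals {I + m^{m+1}}_m is homogeneous (i.e. f_I(x^s) = s · f_I(x) for all s ∈ ℕ and x) if and only if I is a radical ideal. -/

import Mathlib

/-- The maximal ideal `(x_1, ..., x_n)` of the formal power series ring `k[[x_1, ..., x_n]]`. -/
noncomputable def mIdeal (k : Type) [Field k] (n : ℕ) : Ideal (MvPowerSeries (Fin n) k) :=
  RingHom.ker (MvPowerSeries.constantCoeff : MvPowerSeries (Fin n) k →+* k)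

/-- The filtration `f_I : R/I → ℕ ∪ {∞}` determined by the chain of ideals
`{I + 𝔪^(m+1)}_m`: `f_I g` is the supremum of `m + 1` over all `m` with
`g ∈ (I + 𝔪^(m+1))/I`. -/
noncomputable def fI (k : Type) [Field k] {n : ℕ} (I : Ideal (MvPowerSeries (Fin n) k))
    (g : MvPowerSeries (Fin n) k ⧸ I) : ℕ∞ :=
  ⨆ (m : ℕ) (_ : g ∈ (I ⊔ (mIdeal k n) ^ (m + 1)).map (Ideal.Quotient.mk I)),
    ((m : ℕ∞) + 1)

/-! Because `I` is generated by homogeneous elements, membership in `I + 𝔪^(m+1)` is decided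
degree by degree: `g ∈ I + 𝔪^(m+1)` iff the homogeneous components of `g` of degree `≤ m` lie
in `I`. Hence `f_I(g)` is the least degree `d` of a component of `g` outside `I`, and by Krull's
intersection theorem it is `∞` exactly when `g ∈ I`. Modulo `I`, the component of degree `s d`
of `g^s` is the `s`-th power of the component of degree `d` of `g`; so if `I` is radical it is
not in `I` and `f_I(g^s) = s f_I(g)`. Conversely, if `f_I` is homogeneous and `g^s ∈ I`, then
`s f_I(g) = f_I(g^s) = ∞`, so `f_I(g) = ∞` and `g ∈ I`. -/

theorem MvPolynomial.IsHomogeneous.coe {σ R : Type*} [CommSemiring R] {p : MvPolynomial σ R}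
    {d : ℕ} (hp : p.IsHomogeneous d) : (p : MvPowerSeries σ R).IsHomogeneous d :=
  fun hd => hp (by rwa [MvPolynomial.coeff_coe] at hd)

theorem Ideal.mem_of_forall_mem_sup_pow {A : Type*} [CommRing A] [IsNoetherianRing A]
    [IsLocalRing A] {I J : Ideal A} (hJ : J ≠ ⊤) {x : A} (hx : ∀ m, x ∈ I ⊔ J ^ m) :
    x ∈ I := by
  rw [← Ideal.Quotient.eq_zero_iff_mem, ← Submodule.mem_bot A,
    ← Ideal.iInf_pow_smul_eq_bot_of_isLocalRing (M := A ⧸ I) J hJ, Submodule.mem_iInf]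
  intro m
  obtain ⟨a, ha, b, hb, rfl⟩ := Submodule.mem_sup.mp (hx m)
  have : Ideal.Quotient.mk I (a + b) = b • 1 := by
    rw [map_add, Ideal.Quotient.eq_zero_iff_mem.mpr ha, zero_add, Algebra.smul_def, mul_one]
    rfl
  rw [this]
  exact Submodule.smul_mem_smul hb Submodule.mem_top

namespace MvPowerSeries

variable {σ R : Type*}

theorem le_order_of_mem_ker_constantCoeff_pow [CommSemiring R] {f : MvPowerSeries σ R} {m : ℕ}
    (hf : f ∈ RingHom.ker (constantCoeff (σ := σ) (R := R)) ^ m) :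
    (m : ℕ∞) ≤ f.order := by
  induction m generalizing f with
  | zero => simp
  | succ m ih =>
    rw [pow_succ] at hf
    refine Submodule.mul_induction_on hf (fun a ha b hb => ?_) (fun a b ha hb => ?_)
    · calc ((m + 1 : ℕ) : ℕ∞) = m + 1 := by push_cast; rfl
        _ ≤ a.order + b.order :=
          add_le_add (ih ha) (one_le_order_iff_constCoeff_eq_zero.mpr (RingHom.mem_ker.mp hb))
        _ ≤ (a * b).order := le_order_mul
    · exact (le_min ha hb).trans min_order_le_add

theorem exists_sum_X_mul_of_constantCoeff_eq_zero [Fintype σ] [CommSemiring R] [NoZeroDivisors R]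
    [Nontrivial R] {f : MvPowerSeries σ R} (hf : constantCoeff f = 0) :
    ∃ q : σ → MvPowerSeries σ R,
      f = ∑ i, X i * q i ∧ ∀ i, f.order ≤ (q i).order + 1 := by
  classical
  -- every nonzero exponent picks a variable of its support; `p i` collects the terms picking `i`
  let p : σ → MvPowerSeries σ R := fun i e =>
    if h : e.support.Nonempty then (if h.choose = i then coeff e f else 0) else 0
  have hp : ∀ i, X i ∣ p i := fun i => X_dvd_iff.mpr fun e he => by
    change dite _ _ _ = 0
    split_ifs with h hi
    · exact absurd he (Finsupp.mem_support_iff.mp (hi ▸ h.choose_spec))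
    all_goals rfl
  choose q hq using hp
  refine ⟨q, ?_, fun i => ?_⟩
  · ext e
    simp_rw [map_sum, ← hq]
    change coeff e f = ∑ i, dite _ _ _
    split_ifs with h
    · simp
    · rw [Finsupp.support_nonempty_iff, not_not] at h
      simp [h, hf]
  · have hX : (X i : MvPowerSeries σ R).order = 1 := by
      rw [X, order_monomial_of_ne_zero one_ne_zero, Finsupp.degree_single, Nat.cast_one]
    calc f.order ≤ (p i).order := le_order fun e he => by
          change dite _ _ _ = 0
          split_ifs <;> simp [coeff_of_lt_order he]
      _ = (q i).order + 1 := by rw [hq, order_mul, hX, add_comm]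

theorem mem_ker_constantCoeff_pow_iff [Finite σ] [CommSemiring R] [NoZeroDivisors R] [Nontrivial R]
    {f : MvPowerSeries σ R} {m : ℕ} :
    f ∈ RingHom.ker (constantCoeff (σ := σ) (R := R)) ^ m ↔ (m : ℕ∞) ≤ f.order := by
  refine ⟨le_order_of_mem_ker_constantCoeff_pow, fun hf => ?_⟩
  have := Fintype.ofFinite σ
  induction m generalizing f with
  | zero => simp
  | succ m ih =>
    have h0 : constantCoeff f = 0 :=
      one_le_order_iff_constCoeff_eq_zero.mp (le_trans (by simp) hf)
    obtain ⟨q, rfl, hq⟩ := exists_sum_X_mul_of_constantCoeff_eq_zero h0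
    refine Submodule.sum_mem _ fun i _ => ?_
    rw [pow_succ']
    refine Submodule.mul_mem_mul (by simp) (ih ?_)
    have := hf.trans (hq i)
    push_cast at this
    exact (ENat.add_le_add_iff_right ENat.one_ne_top).mp this

section Homogeneous

variable [CommSemiring R]

open Finset.HasAntidiagonal in
theorem homogeneousComponent_mul (d : ℕ) (f g : MvPowerSeries σ R) :
    homogeneousComponent d (f * g) =
      ∑ p ∈ antidiagonal d, homogeneousComponent p.1 f * homogeneousComponent p.2 g := by
  classical
  ext e
  simp only [coeff_homogeneousComponent, map_sum, coeff_mul, ite_mul, zero_mul, mul_ite, mul_zero,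
    ← ite_and]
  rw [Finset.sum_comm]
  split_ifs with he
  · refine Finset.sum_congr rfl fun q hq => ?_
    rw [mem_antidiagonal] at hq
    have hdeg : q.1.degree + q.2.degree = d := by rw [← he, ← hq, map_add]
    rw [Finset.sum_eq_single_of_mem (q.1.degree, q.2.degree) (by simpa using hdeg),
      if_pos ⟨rfl, rfl⟩]
    rintro p - hne
    exact if_neg fun ⟨h2, h1⟩ => hne (Prod.ext h1.symm h2.symm)
  · refine (Finset.sum_eq_zero fun q hq => Finset.sum_eq_zero fun p hp => ?_).symm
    rw [mem_antidiagonal] at hp hq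
    exact if_neg fun ⟨h2, h1⟩ => he (by rw [← hq, map_add, h1, h2, hp])

theorem IsHomogeneous.homogeneousComponent_of_ne {f : MvPowerSeries σ R} {c d : ℕ}
    (hf : f.IsHomogeneous c) (h : d ≠ c) : homogeneousComponent d f = 0 := by
  ext e
  rw [coeff_homogeneousComponent, map_zero]
  split_ifs with he
  · exact hf.coeff_eq_zero (he ▸ h)
  · rfl

theorem homogeneousComponent_zero_one : homogeneousComponent 0 (1 : MvPowerSeries σ R) = 1 := by
  classical
  ext e
  rw [coeff_homogeneousComponent, coeff_one]
  split_ifs <;> simp_all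

theorem isHomogeneous_monomial (e : σ →₀ ℕ) (a : R) :
    (monomial e a).IsHomogeneous e.degree :=
  fun {d} hd => by
    classical
    rw [coeff_monomial] at hd
    split_ifs at hd with h
    · rw [h, Finsupp.degree_eq_weight_one]; rfl
    · exact absurd rfl hd

theorem natCast_mul_le_order_pow {f : MvPowerSeries σ R} {d : ℕ} (hf : (d : ℕ∞) ≤ f.order)
    (s : ℕ) : ((s * d : ℕ) : ℕ∞) ≤ (f ^ s).order :=
  calc ((s * d : ℕ) : ℕ∞) = s • (d : ℕ∞) := by simp
    _ ≤ s • f.order := nsmul_le_nsmul_right hf s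
    _ ≤ (f ^ s).order := le_order_pow s

theorem homogeneousComponent_pow_of_le_order {f : MvPowerSeries σ R} {d : ℕ}
    (hf : (d : ℕ∞) ≤ f.order) (s : ℕ) :
    homogeneousComponent (s * d) (f ^ s) = homogeneousComponent d f ^ s := by
  induction s with
  | zero => simp [homogeneousComponent_zero_one]
  | succ s ih =>
    rw [pow_succ, pow_succ, ← ih, add_mul, one_mul,
      homogeneousComponent_mul_of_le_order (natCast_mul_le_order_pow hf s) hf]

end Homogeneous

section Ideal

variable [CommRing R]

theorem le_order_sub_truncTotal [Finite σ] (n : ℕ) (f : MvPowerSeries σ R) :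
    (n : ℕ∞) ≤ (f - truncTotal n f).order :=
  le_order fun e he => by
    rw [map_sub, MvPolynomial.coeff_coe, coeff_truncTotal _ (by exact_mod_cast he), sub_self]

def IsHomogeneousIdeal (I : Ideal (MvPowerSeries σ R)) : Prop :=
  ∀ f ∈ I, ∀ d, homogeneousComponent d f ∈ I

theorem isHomogeneousIdeal_span {S : Set (MvPowerSeries σ R)}
    (hS : ∀ f ∈ S, ∃ c, f.IsHomogeneous c) : IsHomogeneousIdeal (Ideal.span S) := by
  intro f hf
  induction hf using Submodule.span_induction with
  | mem f hf =>
    intro d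
    obtain ⟨c, hc⟩ := hS f hf
    obtain rfl | hdc := eq_or_ne d c
    · rw [← isHomogeneous_iff_eq_homogeneousComponent.mp hc]
      exact Ideal.subset_span hf
    · rw [hc.homogeneousComponent_of_ne hdc]
      exact Ideal.zero_mem _
  | zero => simp
  | add f g _ _ hf hg => simpa using fun d => Ideal.add_mem _ (hf d) (hg d)
  | smul a f _ hf =>
    intro d
    rw [smul_eq_mul, homogeneousComponent_mul]
    exact Ideal.sum_mem _ fun p _ => Ideal.mul_mem_left _ _ (hf p.2)

noncomputable def orderMod (I : Ideal (MvPowerSeries σ R)) (g : MvPowerSeries σ R) : ℕ∞ :=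
  ⨅ (d : ℕ) (_ : homogeneousComponent d g ∉ I), (d : ℕ∞)

variable {I : Ideal (MvPowerSeries σ R)} {g : MvPowerSeries σ R}

theorem coe_lt_orderMod_iff {m : ℕ} :
    (m : ℕ∞) < orderMod I g ↔ ∀ e ≤ m, homogeneousComponent e g ∈ I := by
  rw [← ENat.add_one_le_iff (ENat.natCast_ne_top m), orderMod, le_iInf₂_iff]
  refine forall_congr' fun e => ?_
  rw [not_imp_comm, not_le]
  norm_cast
  rw [Nat.lt_add_one_iff]

theorem orderMod_eq_top_iff : orderMod I g = ⊤ ↔ ∀ d, homogeneousComponent d g ∈ I := by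
  simp [orderMod]

theorem orderMod_eq_coe_iff {d : ℕ} :
    orderMod I g = d ↔
      (∀ e < d, homogeneousComponent e g ∈ I) ∧ homogeneousComponent d g ∉ I := by
  constructor
  · intro h
    have hlt : ∀ e < d, homogeneousComponent e g ∈ I := fun e he =>
      coe_lt_orderMod_iff.mp (h ▸ by exact_mod_cast he) e le_rfl
    refine ⟨hlt, fun hd => ?_⟩
    have : (d : ℕ∞) < orderMod I g := coe_lt_orderMod_iff.mpr fun e he =>
      he.lt_or_eq.elim (hlt e) (· ▸ hd)
    exact this.ne h.symm
  · rintro ⟨hlt, hd⟩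
    refine le_antisymm (iInf₂_le d hd) (le_iInf₂ fun e he => ?_)
    exact_mod_cast not_lt.mp fun h => he (hlt e h)

theorem coe_truncTotal_mem [Finite σ] {n : ℕ} (h : ∀ e < n, homogeneousComponent e g ∈ I) :
    (truncTotal n g : MvPowerSeries σ R) ∈ I := by
  rw [truncTotal_eq_sum]
  exact Ideal.sum_mem _ fun e he => h e (Finset.mem_range.mp he)

theorem orderMod_eq_of_sub_mem (hI : IsHomogeneousIdeal I) {r : MvPowerSeries σ R}
    (h : g - r ∈ I) : orderMod I g = orderMod I r := by
  have hcomp (d : ℕ) : homogeneousComponent d g ∈ I ↔ homogeneousComponent d r ∈ I := by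
    have hd := hI _ h d
    rw [map_sub] at hd
    exact ⟨fun hg => by simpa using I.sub_mem hg hd, fun hr => by simpa using I.add_mem hd hr⟩
  simp only [orderMod, hcomp]

theorem mem_sup_ker_constantCoeff_pow_iff [Finite σ] [NoZeroDivisors R] [Nontrivial R]
    (hI : IsHomogeneousIdeal I) {m : ℕ} :
    g ∈ I ⊔ RingHom.ker (constantCoeff (σ := σ) (R := R)) ^ (m + 1) ↔
      (m : ℕ∞) < orderMod I g := by
  rw [coe_lt_orderMod_iff]
  constructor
  · rintro hg e he
    obtain ⟨a, ha, b, hb, rfl⟩ := Submodule.mem_sup.mp hg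
    have hb' : homogeneousComponent e b = 0 := homogeneousComponent_of_lt_order_eq_zero <|
      lt_of_lt_of_le (by exact_mod_cast Nat.lt_succ_of_le he) (mem_ker_constantCoeff_pow_iff.mp hb)
    rw [map_add, hb', add_zero]
    exact hI a ha e
  · intro hg
    rw [← add_sub_cancel (truncTotal (m + 1) g : MvPowerSeries σ R) g]
    refine Submodule.add_mem_sup ?_
      (mem_ker_constantCoeff_pow_iff.mpr (le_order_sub_truncTotal _ _))
    exact coe_truncTotal_mem fun e he => hg e (Nat.lt_succ_iff.mp he)

variable [Finite σ] [IsDomain R] [IsNoetherianRing R] [IsLocalRing R]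

theorem orderMod_eq_top_iff_mem (hI : IsHomogeneousIdeal I) : orderMod I g = ⊤ ↔ g ∈ I := by
  refine ⟨fun h => Ideal.mem_of_forall_mem_sup_pow (J := RingHom.ker constantCoeff)
    (RingHom.ker_ne_top _) fun m => ?_, fun hg => orderMod_eq_top_iff.mpr (hI g hg)⟩
  cases m with
  | zero => simp
  | succ m => exact (mem_sup_ker_constantCoeff_pow_iff hI).mpr (h ▸ ENat.natCast_lt_top m)

theorem orderMod_pow (hI : IsHomogeneousIdeal I) (hrad : I.IsRadical) (htop : I ≠ ⊤)
    (g : MvPowerSeries σ R) (s : ℕ) : orderMod I (g ^ s) = s * orderMod I g := by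
  rcases s.eq_zero_or_pos with rfl | hs
  · rw [pow_zero, Nat.cast_zero, zero_mul, ← Nat.cast_zero, orderMod_eq_coe_iff,
      homogeneousComponent_zero_one]
    exact ⟨fun e he => absurd he e.not_lt_zero, (Ideal.ne_top_iff_one I).mp htop⟩
  by_cases hg : orderMod I g = ⊤
  · rw [hg, ENat.mul_top (by exact_mod_cast hs.ne'), orderMod_eq_top_iff_mem hI]
    exact I.pow_mem_of_mem ((orderMod_eq_top_iff_mem hI).mp hg) s hs
  obtain ⟨d, hd⟩ := ENat.ne_top_iff_exists.mp hg
  obtain ⟨hlt, -⟩ := orderMod_eq_coe_iff.mp hd.symm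
  -- replace `g` by `r ≡ g mod I`, which has no components of degree `< d` at all
  set r := g - truncTotal d g
  have hgr : g - r ∈ I := by simpa [r] using coe_truncTotal_mem hlt
  have hr : (d : ℕ∞) ≤ r.order := le_order_sub_truncTotal d g
  have hrd := (orderMod_eq_coe_iff.mp ((orderMod_eq_of_sub_mem hI hgr).symm.trans hd.symm)).2
  rw [orderMod_eq_of_sub_mem hI (I.mem_of_dvd (sub_dvd_pow_sub_pow g r s) hgr), ← hd,
    ← Nat.cast_mul, orderMod_eq_coe_iff, homogeneousComponent_pow_of_le_order hr]
  refine ⟨fun e he => ?_, fun h => hrd (hrad ⟨s, h⟩)⟩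
  rw [homogeneousComponent_of_lt_order_eq_zero
    ((Nat.cast_lt.mpr he).trans_le (natCast_mul_le_order_pow hr s))]
  exact I.zero_mem

theorem forall_orderMod_pow_eq_mul_iff_isRadical (hI : IsHomogeneousIdeal I) (htop : I ≠ ⊤) :
    (∀ (g : MvPowerSeries σ R) (s : ℕ), orderMod I (g ^ s) = s * orderMod I g) ↔
      I.IsRadical := by
  refine ⟨fun H g ⟨s, hs⟩ => ?_, fun hrad => orderMod_pow hI hrad htop⟩
  have h := (orderMod_eq_top_iff_mem hI).mpr hs
  rw [H] at h
  replace h := WithTop.mul_eq_top_iff.mp h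
  exact (orderMod_eq_top_iff_mem hI).mp (h.elim (·.2) fun h => absurd h.1 (ENat.natCast_ne_top s))

end Ideal

end MvPowerSeries

theorem ENat.iSup_natCast_add_one_of_lt (d : ℕ∞) :
    ⨆ (m : ℕ) (_ : (m : ℕ∞) < d), ((m : ℕ∞) + 1) = d := by
  refine le_antisymm (iSup₂_le fun m hm => Order.add_one_le_of_lt hm)
    (le_of_forall_lt fun c hc => ?_)
  lift c to ℕ using hc.ne_top
  exact (by exact_mod_cast c.lt_add_one : (c : ℕ∞) < c + 1).trans_le
    (le_iSup₂_of_le c hc le_rfl)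

open MvPowerSeries

theorem fI_mk {k : Type} [Field k] {n : ℕ} {I : Ideal (MvPowerSeries (Fin n) k)}
    (hI : IsHomogeneousIdeal I) (g : MvPowerSeries (Fin n) k) :
    fI k I (Ideal.Quotient.mk I g) = orderMod I g := by
  have hmem (m : ℕ) :
      Ideal.Quotient.mk I g ∈ (I ⊔ mIdeal k n ^ (m + 1)).map (Ideal.Quotient.mk I) ↔
        (m : ℕ∞) < orderMod I g :=
    (Ideal.mem_quotient_iff_mem le_sup_left).trans (mem_sup_ker_constantCoeff_pow_iff hI)
  simp only [fI, hmem]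
  exact ENat.iSup_natCast_add_one_of_lt _

theorem fI_homogeneous_iff_radical_general (k : Type) [Field k]
    (n : ℕ) (I : Ideal (MvPowerSeries (Fin n) k)) (hI : I ≠ ⊤)
    (h : (∃ S : Set (MvPolynomial (Fin n) k),
            (∀ f ∈ S, ∃ d, MvPolynomial.IsHomogeneous f d) ∧
            I = Ideal.span ((fun f : MvPolynomial (Fin n) k => (↑f : MvPowerSeries (Fin n) k)) '' S)) ∨
        (∃ S : Set (Fin n →₀ ℕ),
            I = Ideal.span ((fun d => MvPowerSeries.monomial d (1 : k)) '' S))) :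
    (∀ (x : MvPowerSeries (Fin n) k ⧸ I) (s : ℕ), fI k I (x ^ s) = (s : ℕ∞) * fI k I x) ↔
      I.radical = I := by
  have hhom : IsHomogeneousIdeal I := by
    rcases h with ⟨S, hS, rfl⟩ | ⟨S, rfl⟩ <;> refine isHomogeneousIdeal_span ?_
    · rintro _ ⟨p, hp, rfl⟩
      obtain ⟨d, hd⟩ := hS p hp
      exact ⟨d, MvPolynomial.IsHomogeneous.coe hd⟩
    · rintro _ ⟨e, -, rfl⟩
      exact ⟨e.degree, isHomogeneous_monomial e 1⟩
  rw [Ideal.radical_eq_iff, ← forall_orderMod_pow_eq_mul_iff_isRadical hhom hI]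
  simp only [Ideal.Quotient.mk_surjective.forall, ← map_pow, fI_mk hhom]

/-- for a proper ideal `I` of `k[[x_1, ..., x_n]]` which is homogeneous
(extended from an ideal generated by homogeneous polynomials) or a monomial ideal, the
filtration `f_I` determined by `{I + 𝔪^(m+1)}_m` is homogeneous
(`f_I (x^s) = s · f_I x` for all `s`, `x`) if and only if `I` is a radical ideal. -/
theorem fI_homogeneous_iff_radical (k : Type) [Field k] [IsAlgClosed k] [CharZero k]
    (n : ℕ) (I : Ideal (MvPowerSeries (Fin n) k)) (hI : I ≠ ⊤)
    (h : (∃ S : Set (MvPolynomial (Fin n) k),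
            (∀ f ∈ S, ∃ d, MvPolynomial.IsHomogeneous f d) ∧
            I = Ideal.span ((fun f : MvPolynomial (Fin n) k => (↑f : MvPowerSeries (Fin n) k)) '' S)) ∨
        (∃ S : Set (Fin n →₀ ℕ),
            I = Ideal.span ((fun d => MvPowerSeries.monomial d (1 : k)) '' S))) :
    (∀ (x : MvPowerSeries (Fin n) k ⧸ I) (s : ℕ), fI k I (x ^ s) = (s : ℕ∞) * fI k I x) ↔
      I.radical = I :=
  fI_homogeneous_iff_radical_general k n I hI h
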